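/- Robustness of Λ against small perturbations of the response: let (X, Y) be a (p+1)-dimensional random vector and (ε_n)_{n∈ℕ} a sequence of real random variables on the same probability space. If (i) ε_n → 0 in distribution and, for every n, ε_n is independent of the pair (X, Y), and (ii) F_{Y+ε_n}(F_{Y+ε_n}⁻¹(t)) → F_Y(F_Y⁻¹(t)) for Lebesgue-almost all t ∈ (0, 1), then Λ(Y + ε_n | X) → Λ(Y|X) as n → ∞. -/

import Mathlib

open MeasureTheory ProbabilityTheory Set Filter Topology

/-- The (nonparametric) relative effect `Ψ(μ, ν) = ∫ μ((-∞,y)) + (1/2) μ({y}) dν(y)`. -/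
noncomputable def relEffect (μ ν : Measure ℝ) : ℝ :=
  ∫ y, ((μ (Set.Iio y)).toReal + (1 / 2) * (μ {y}).toReal) ∂ν

/-- `α(μ) = 1 - ∫ μ({x}) dμ(x) = 1 - P(X = X*)`, the non-discrete mass of `μ`. -/
noncomputable def alphaCoeff {E : Type*} [MeasurableSpace E] (μ : Measure E) : ℝ :=
  1 - ∫ x, (μ {x}).toReal ∂μ

/-- The coefficient of separation `Λ(Y|X)`. -/
noncomputable def sepCoeff {Ω E : Type*} [MeasurableSpace Ω] [MeasurableSpace E]
    (P : Measure Ω) [IsFiniteMeasure P] (Y : Ω → ℝ) (X : Ω → E) : ℝ :=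
  (alphaCoeff (P.map X))⁻¹ *
    ∫ x : E × E,
      (relEffect (condDistrib Y X P x.1) (condDistrib Y X P x.2)
        - relEffect (condDistrib Y X P x.2) (condDistrib Y X P x.1)) ^ 2
      ∂((P.map X).prod (P.map X))

/-- A random variable is non-degenerate if it is not a.s. constant. -/
def Nondegenerate {Ω α : Type*} [MeasurableSpace Ω] (P : Measure Ω) (Z : Ω → α) : Prop :=
  ¬ ∃ c, ∀ᵐ ω ∂P, Z ω = c

/-- The cdf of a law on `ℝ`: `F(w) = μ(-∞, w]`. -/
noncomputable def mcdf (μ : Measure ℝ) (w : ℝ) : ℝ := (μ (Set.Iic w)).toReal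

/-- The pseudo-inverse (quantile function) of the cdf: `F⁻¹(t) = inf { w : F(w) ≥ t }`. -/
noncomputable def mquantile (μ : Measure ℝ) (t : ℝ) : ℝ := sInf {w : ℝ | t ≤ mcdf μ w}

/-- The Markov product law of `(X, Y)`: the law on `ℝ²` of a pair `(Y, Y')` that is
conditionally i.i.d. given `X`, i.e. `ν(B) = ∫ (κ(x) ⊗ κ(x))(B) dμ_X(x)`. -/
noncomputable def markovProd {Ω E : Type*} [MeasurableSpace Ω] [MeasurableSpace E]
    (P : Measure Ω) [IsFiniteMeasure P] (Y : Ω → ℝ) (X : Ω → E) : Measure (ℝ × ℝ) :=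
  (P.map X).bind fun x => (condDistrib Y X P x).prod (condDistrib Y X P x)

/-!
Writing `Ψ(μ, ν) - Ψ(ν, μ) = ∫ sign (y₂ - y₁) d(μ ⊗ ν)` and noting that `α(X)` does not involve
the response, only the integrand of `Λ` has to converge. Independence of `εₙ` from `(X, Y)` makes
the conditional law of `Y + εₙ` given `X = x` the convolution `κ(x) ∗ ρₙ`, `ρₙ` the law of `εₙ`,
so the sign integral of the perturbed response is `∫ Gₙ(y₂ - y₁) d(κ(x₁) ⊗ κ(x₂))` with
`Gₙ(s) = E sign (s + εₙ' - εₙ)` for an independent copy `εₙ'`. By symmetry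
`Gₙ(0) = 0`, and for `s ≠ 0` we have `|Gₙ(s) - sign s| ≤ 4 P(|εₙ| ≥ |s|/2) → 0`. All integrands
are bounded by `1`, so dominated convergence, applied twice, concludes.
-/

namespace Real

@[fun_prop]
lemma measurable_sign : Measurable Real.sign :=
  Measurable.ite measurableSet_Iio measurable_const
    (Measurable.ite measurableSet_Ioi measurable_const measurable_const)

lemma abs_sign_le_one (r : ℝ) : |Real.sign r| ≤ 1 := by
  rcases sign_apply_eq r with h | h | h <;> simp [h]

lemma sign_add_of_abs_lt {s d : ℝ} (h : |d| < |s|) : Real.sign (s + d) = Real.sign s := by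
  rcases lt_trichotomy s 0 with hs | hs | hs
  · rw [abs_of_neg hs] at h
    rw [sign_of_neg hs, sign_of_neg (by linarith [le_abs_self d])]
  · exact ((abs_nonneg d).not_gt (by simpa [hs] using h)).elim
  · rw [abs_of_pos hs] at h
    rw [sign_of_pos hs, sign_of_pos (by linarith [neg_abs_le d])]

end Real

lemma abs_integral_le_one_of_abs_le_one {α : Type*} [MeasurableSpace α] {μ : Measure α}
    [IsProbabilityMeasure μ] {f : α → ℝ} (h : ∀ a, |f a| ≤ 1) : |∫ a, f a ∂μ| ≤ 1 := by
  simpa [Real.norm_eq_abs] using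
    norm_integral_le_of_norm_le_const (μ := μ) (C := 1) (f := f)
      (ae_of_all _ fun a => by rw [Real.norm_eq_abs]; exact h a)

noncomputable def ltHalfEq (q : ℝ × ℝ) : ℝ :=
  (Iio q.2).indicator 1 q.1 + 1 / 2 * ({q.2} : Set ℝ).indicator 1 q.1

lemma measurable_ltHalfEq : Measurable ltHalfEq := by
  unfold ltHalfEq
  simp only [Set.indicator_apply, mem_Iio, mem_singleton_iff]
  exact (Measurable.ite (measurableSet_lt measurable_fst measurable_snd) measurable_const
    measurable_const).add ((Measurable.ite (measurableSet_eq_fun measurable_fst measurable_snd)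
      measurable_const measurable_const).const_mul _)

lemma abs_ltHalfEq_le (q : ℝ × ℝ) : |ltHalfEq q| ≤ 2 := by
  unfold ltHalfEq
  simp only [Set.indicator_apply, mem_Iio, mem_singleton_iff]
  split_ifs <;> norm_num

lemma ltHalfEq_sub_ltHalfEq_swap (q : ℝ × ℝ) :
    ltHalfEq q - ltHalfEq q.swap = Real.sign (q.2 - q.1) := by
  obtain ⟨x, y⟩ := q
  rcases lt_trichotomy x y with h | rfl | h
  · simp [ltHalfEq, h, h.ne, h.ne', h.not_gt, Real.sign_of_pos (sub_pos.2 h)]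
  · simp [ltHalfEq]
  · simp [ltHalfEq, h, h.ne, h.ne', h.not_gt, Real.sign_of_neg (sub_neg.2 h)]

lemma integrable_ltHalfEq (μ : Measure (ℝ × ℝ)) [IsFiniteMeasure μ] : Integrable ltHalfEq μ :=
  .of_bound measurable_ltHalfEq.aestronglyMeasurable 2 (ae_of_all _ abs_ltHalfEq_le)

lemma relEffect_eq_integral_prod (μ ν : Measure ℝ) [IsFiniteMeasure μ] [IsFiniteMeasure ν] :
    relEffect μ ν = ∫ q, ltHalfEq q ∂(μ.prod ν) := by
  rw [integral_prod_symm _ (integrable_ltHalfEq _)]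
  refine integral_congr_ae (ae_of_all _ fun y => ?_)
  simp only [ltHalfEq]
  rw [integral_add, integral_const_mul, integral_indicator_one measurableSet_Iio,
    integral_indicator_one (measurableSet_singleton y), measureReal_def, measureReal_def]
  · exact (integrable_const 1).indicator measurableSet_Iio
  · exact ((integrable_const 1).indicator (measurableSet_singleton y)).const_mul _

lemma relEffect_sub_relEffect (μ ν : Measure ℝ) [IsFiniteMeasure μ] [IsFiniteMeasure ν] :
    relEffect μ ν - relEffect ν μ = ∫ q, Real.sign (q.2 - q.1) ∂(μ.prod ν) := by
  rw [relEffect_eq_integral_prod, relEffect_eq_integral_prod ν μ,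
    ← integral_prod_swap (μ := ν) ltHalfEq, ← integral_sub (integrable_ltHalfEq _)
      ((integrable_ltHalfEq _).swap : Integrable (fun q => ltHalfEq q.swap) _)]
  simp_rw [ltHalfEq_sub_ltHalfEq_swap]

namespace MeasureTheory.Measure

lemma conv_apply {M : Type*} [AddMonoid M] [MeasurableSpace M] [MeasurableAdd₂ M]
    (μ ν : Measure M) [SFinite ν] {s : Set M} (hs : MeasurableSet s) :
    (μ ∗ ν) s = ∫⁻ x, ν ((x + ·) ⁻¹' s) ∂μ := by
  rw [conv, map_apply measurable_add hs, prod_apply (measurable_add hs)]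
  rfl

lemma prod_conv_prod (μ₁ ν₁ μ₂ ν₂ : Measure ℝ) [IsFiniteMeasure μ₁]
    [IsFiniteMeasure ν₁] [IsFiniteMeasure μ₂] [IsFiniteMeasure ν₂] :
    (μ₁.prod μ₂) ∗ (ν₁.prod ν₂) = (μ₁ ∗ ν₁).prod (μ₂ ∗ ν₂) := by
  refine (prod_eq fun s t hs ht => ?_).symm
  rw [conv_apply _ _ (hs.prod ht), conv_apply _ _ hs, conv_apply _ _ ht,
    ← lintegral_prod_mul]
  · refine lintegral_congr fun x => ?_
    rw [← prod_prod]
    rfl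
  · exact (measurable_measure_prodMk_left (measurable_add hs)).aemeasurable
  · exact (measurable_measure_prodMk_left (measurable_add ht)).aemeasurable

end MeasureTheory.Measure

namespace ProbabilityTheory.Kernel

lemma compProd_const_apply {α β γ : Type*} [MeasurableSpace α] [MeasurableSpace β]
    [MeasurableSpace γ] (κ : Kernel α β) [IsSFiniteKernel κ] (ρ : Measure γ) [SFinite ρ] (a : α) :
    (κ ⊗ₖ const (α × β) ρ) a = (κ a).prod ρ := by
  ext s hs
  rw [compProd_apply hs, Measure.prod_apply hs]
  rfl

end ProbabilityTheory.Kernel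

lemma condDistrib_add_ae_eq_conv {Ω E : Type*} [MeasurableSpace Ω] [MeasurableSpace E]
    {P : Measure Ω} [IsFiniteMeasure P] {X : Ω → E} {Y Z : Ω → ℝ}
    (hX : Measurable X) (hY : Measurable Y) (hZ : Measurable Z)
    (hindep : IndepFun (fun ω => (X ω, Y ω)) Z P) :
    ∀ᵐ x ∂(P.map X), condDistrib (fun ω => Y ω + Z ω) X P x = condDistrib Y X P x ∗ P.map Z := by
  set κ := condDistrib Y X P
  set η := κ ⊗ₖ Kernel.const (E × ℝ) (P.map Z)
  have hlaw : P.map (fun ω => (X ω, Y ω + Z ω)) = P.map X ⊗ₘ η.map (fun p => p.1 + p.2) := by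
    calc P.map (fun ω => (X ω, Y ω + Z ω))
        = (((P.map fun ω => (X ω, Y ω)).prod (P.map Z)).map MeasurableEquiv.prodAssoc).map
            (Prod.map id fun p => p.1 + p.2) := by
          rw [← (indepFun_iff_map_prod_eq_prod_map_map (hX.prodMk hY).aemeasurable
            hZ.aemeasurable).1 hindep, Measure.map_map (by fun_prop) (by fun_prop),
            Measure.map_map (by fun_prop) (by fun_prop)]
          rfl
      _ = P.map X ⊗ₘ η.map (fun p => p.1 + p.2) := by
          rw [← Measure.compProd_const, ← compProd_map_condDistrib hY.aemeasurable,
            Measure.compProd_assoc', Measure.compProd_map (by fun_prop)]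
  filter_upwards [condDistrib_ae_eq_of_measure_eq_compProd_of_measurable hX (by fun_prop) hlaw]
    with x hx
  rw [hx, Kernel.map_apply _ (by fun_prop), Kernel.compProd_const_apply]
  rfl

lemma tendsto_measureReal_abs_ge_of_tendsto_integral {ρ : ℕ → Measure ℝ}
    [∀ n, IsFiniteMeasure (ρ n)]
    (h : ∀ f : BoundedContinuousFunction ℝ ℝ, Tendsto (fun n => ∫ x, f x ∂(ρ n)) atTop (𝓝 (f 0)))
    {c : ℝ} (hc : 0 < c) :
    Tendsto (fun n => (ρ n).real {x | c ≤ |x|}) atTop (𝓝 0) := by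
  let f : BoundedContinuousFunction ℝ ℝ :=
    .ofNormedAddCommGroup (fun x => min 1 (|x| / c)) (by fun_prop) 1 fun x => by
      rw [Real.norm_eq_abs, abs_of_nonneg (by positivity)]
      exact min_le_left _ _
  have hS : MeasurableSet {x : ℝ | c ≤ |x|} := measurableSet_le measurable_const (by fun_prop)
  have hf0 : f 0 = 0 := by simp [f]
  refine squeeze_zero (fun n => measureReal_nonneg) (fun n => ?_) (hf0 ▸ h f)
  rw [← integral_indicator_one hS]
  refine integral_mono ((integrable_const 1).indicator hS) (f.integrable _) fun x => ?_
  by_cases hx : c ≤ |x|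
  · simp [f, hx, le_div_iff₀ hc]
  · simp [f, hx]
    positivity

lemma abs_integral_sign_add_sub_sign_le {α : Type*} [MeasurableSpace α] (μ : Measure α)
    [IsProbabilityMeasure μ] {g : α → ℝ} (hg : Measurable g) (s : ℝ) :
    |∫ a, Real.sign (s + g a) ∂μ - Real.sign s| ≤ 2 * μ.real {a | |s| ≤ |g a|} := by
  have hint : Integrable (fun a => Real.sign (s + g a)) μ :=
    .of_bound (by fun_prop : Measurable _).aestronglyMeasurable 1
      (ae_of_all _ fun a => Real.abs_sign_le_one _)
  have hconst : ∫ _, Real.sign s ∂μ = Real.sign s := by simp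
  have hvanish : ∀ a ∉ {a | |s| ≤ |g a|}, Real.sign (s + g a) - Real.sign s = 0 := fun a ha =>
    sub_eq_zero.2 (Real.sign_add_of_abs_lt (not_le.1 ha))
  rw [← hconst, ← integral_sub hint (integrable_const _),
    ← setIntegral_eq_integral_of_forall_compl_eq_zero hvanish, ← Real.norm_eq_abs]
  refine norm_setIntegral_le_of_norm_le_const (measure_lt_top _ _) fun a _ => ?_
  rw [Real.norm_eq_abs]
  linarith [abs_sub (Real.sign (s + g a)) (Real.sign s), Real.abs_sign_le_one (s + g a),
    Real.abs_sign_le_one s]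

lemma measureReal_abs_sub_ge_le (μ ν : Measure ℝ) [IsProbabilityMeasure μ]
    [IsProbabilityMeasure ν] (c : ℝ) :
    (μ.prod ν).real {e | c ≤ |e.2 - e.1|}
      ≤ μ.real {x | c / 2 ≤ |x|} + ν.real {x | c / 2 ≤ |x|} := by
  set A := {x : ℝ | c / 2 ≤ |x|}
  have hsub : {e : ℝ × ℝ | c ≤ |e.2 - e.1|} ⊆ A ×ˢ univ ∪ univ ×ˢ A := by
    intro e he
    by_contra h
    simp only [A, mem_union, mem_prod, mem_ofPred_eq, mem_univ, and_true, true_and, not_or,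
      not_le] at he h
    linarith [abs_sub e.2 e.1]
  calc (μ.prod ν).real {e | c ≤ |e.2 - e.1|} ≤ (μ.prod ν).real (A ×ˢ univ ∪ univ ×ˢ A) :=
        measureReal_mono hsub
    _ ≤ (μ.prod ν).real (A ×ˢ univ) + (μ.prod ν).real (univ ×ˢ A) := measureReal_union_le _ _
    _ = μ.real A + ν.real A := by simp [measureReal_prod_prod]

noncomputable def smoothedSign (ρ : Measure ℝ) (s : ℝ) : ℝ :=
  ∫ e, Real.sign (s + (e.2 - e.1)) ∂(ρ.prod ρ)

lemma measurable_smoothedSign (ρ : Measure ℝ) [SFinite ρ] : Measurable (smoothedSign ρ) :=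
  (StronglyMeasurable.integral_prod_right'
    (f := fun q : ℝ × ℝ × ℝ => Real.sign (q.1 + (q.2.2 - q.2.1)))
    (by fun_prop : Measurable _).stronglyMeasurable).measurable

lemma abs_smoothedSign_le_one (ρ : Measure ℝ) [IsProbabilityMeasure ρ] (s : ℝ) :
    |smoothedSign ρ s| ≤ 1 :=
  abs_integral_le_one_of_abs_le_one fun _ => Real.abs_sign_le_one _

lemma smoothedSign_zero (ρ : Measure ℝ) [SFinite ρ] : smoothedSign ρ 0 = 0 := by
  have hswap := integral_prod_swap (μ := ρ) (ν := ρ) fun e => Real.sign (e.2 - e.1)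
  have hneg (e : ℝ × ℝ) : Real.sign (e.1 - e.2) = - Real.sign (e.2 - e.1) := by
    rw [← Real.sign_neg, neg_sub]
  simp only [Prod.fst_swap, Prod.snd_swap, hneg, integral_neg] at hswap
  simp only [smoothedSign, zero_add]
  linarith

lemma tendsto_smoothedSign {ρ : ℕ → Measure ℝ} [∀ n, IsProbabilityMeasure (ρ n)]
    (htail : ∀ c > 0, Tendsto (fun n => (ρ n).real {x | c ≤ |x|}) atTop (𝓝 0)) (s : ℝ) :
    Tendsto (fun n => smoothedSign (ρ n) s) atTop (𝓝 (Real.sign s)) := by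
  rcases eq_or_ne s 0 with rfl | hs
  · simp [smoothedSign_zero]
  have hbound : ∀ n, |smoothedSign (ρ n) s - Real.sign s|
      ≤ 4 * (ρ n).real {x | |s| / 2 ≤ |x|} := fun n => by
    calc |smoothedSign (ρ n) s - Real.sign s|
        ≤ 2 * ((ρ n).prod (ρ n)).real {e | |s| ≤ |e.2 - e.1|} :=
          abs_integral_sign_add_sub_sign_le _ (by fun_prop) s
      _ ≤ 2 * ((ρ n).real {x | |s| / 2 ≤ |x|} + (ρ n).real {x | |s| / 2 ≤ |x|}) := by
          gcongr; exact measureReal_abs_sub_ge_le _ _ _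
      _ = 4 * (ρ n).real {x | |s| / 2 ≤ |x|} := by ring
  rw [tendsto_iff_dist_tendsto_zero]
  refine squeeze_zero (fun n => dist_nonneg) hbound ?_
  simpa using (htail (|s| / 2) (by positivity)).const_mul 4

lemma integral_sign_conv_prod_conv (μ ν ρ : Measure ℝ) [IsFiniteMeasure μ]
    [IsFiniteMeasure ν] [IsFiniteMeasure ρ] :
    ∫ q, Real.sign (q.2 - q.1) ∂((μ ∗ ρ).prod (ν ∗ ρ))
      = ∫ y, smoothedSign ρ (y.2 - y.1) ∂(μ.prod ν) := by
  rw [← Measure.prod_conv_prod, integral_conv]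
  · simp only [smoothedSign, Prod.fst_add, Prod.snd_add]
    congr with y
    congr with e
    ring_nf
  · exact .of_bound (by fun_prop : Measurable _).aestronglyMeasurable 1
      (ae_of_all _ fun q => Real.abs_sign_le_one _)

lemma stronglyMeasurable_integral_prod_kernel {E β : Type*} [MeasurableSpace E]
    [MeasurableSpace β] (κ : Kernel E β) [IsSFiniteKernel κ] {f : β × β → ℝ}
    (hf : StronglyMeasurable f) :
    StronglyMeasurable fun z : E × E => ∫ q, f q ∂((κ z.1).prod (κ z.2)) := by
  simpa [Kernel.prod_apply, Kernel.comap_apply] using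
    hf.integral_kernel (κ := κ.comap Prod.fst measurable_fst ×ₖ κ.comap Prod.snd measurable_snd)

lemma tendsto_integral_smoothedSign {ρ : ℕ → Measure ℝ} [∀ n, IsProbabilityMeasure (ρ n)]
    (htail : ∀ c > 0, Tendsto (fun n => (ρ n).real {x | c ≤ |x|}) atTop (𝓝 0))
    (m : Measure (ℝ × ℝ)) [IsFiniteMeasure m] :
    Tendsto (fun n => ∫ y, smoothedSign (ρ n) (y.2 - y.1) ∂m) atTop
      (𝓝 (∫ y, Real.sign (y.2 - y.1) ∂m)) :=
  tendsto_integral_of_dominated_convergence (fun _ => 1)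
    (fun n => ((measurable_smoothedSign _).comp (by fun_prop)).aestronglyMeasurable)
    (integrable_const 1) (fun n => ae_of_all _ fun y => abs_smoothedSign_le_one _ _)
    (ae_of_all _ fun y => tendsto_smoothedSign htail _)

lemma tendsto_integral_sq_relEffect_sub_conv {E : Type*} [MeasurableSpace E] (κ : Kernel E ℝ)
    [IsMarkovKernel κ] (μ : Measure (E × E)) [IsFiniteMeasure μ] {ρ : ℕ → Measure ℝ}
    [∀ n, IsProbabilityMeasure (ρ n)]
    (htail : ∀ c > 0, Tendsto (fun n => (ρ n).real {x | c ≤ |x|}) atTop (𝓝 0)) :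
    Tendsto (fun n => ∫ z, (relEffect (κ z.1 ∗ ρ n) (κ z.2 ∗ ρ n)
        - relEffect (κ z.2 ∗ ρ n) (κ z.1 ∗ ρ n)) ^ 2 ∂μ) atTop
      (𝓝 (∫ z, (relEffect (κ z.1) (κ z.2) - relEffect (κ z.2) (κ z.1)) ^ 2 ∂μ)) := by
  simp_rw [relEffect_sub_relEffect, integral_sign_conv_prod_conv]
  refine tendsto_integral_of_dominated_convergence (fun _ => 1) (fun n => ?_)
    (integrable_const 1) (fun n => ae_of_all _ fun z => ?_)
    (ae_of_all _ fun z => (tendsto_integral_smoothedSign htail _).pow 2)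
  · exact ((stronglyMeasurable_integral_prod_kernel κ
      ((measurable_smoothedSign _).comp (by fun_prop)).stronglyMeasurable).pow
        2).aestronglyMeasurable
  · rw [Real.norm_eq_abs, abs_pow]
    exact pow_le_one₀ (abs_nonneg _)
      (abs_integral_le_one_of_abs_le_one fun y => abs_smoothedSign_le_one _ _)

theorem sepCoeff_robust_to_small_perturbations_general
    {p : ℕ}
    {Ω : Type*} [MeasurableSpace Ω] (P : Measure Ω) [IsProbabilityMeasure P]
    (X : Ω → (Fin p → ℝ)) (Y : Ω → ℝ)
    (hX : Measurable X) (hY : Measurable Y)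
    (ε : ℕ → Ω → ℝ) (hεm : ∀ n, Measurable (ε n))
    (hεdist : ∀ f : BoundedContinuousFunction ℝ ℝ,
      Tendsto (fun n => ∫ x, f x ∂(P.map (ε n))) atTop (𝓝 (f 0)))
    (hεindep : ∀ n, IndepFun (fun ω => (X ω, Y ω)) (ε n) P) :
    Tendsto (fun n => sepCoeff P (fun ω => Y ω + ε n ω) X) atTop
      (𝓝 (sepCoeff P Y X)) := by
  have (n : ℕ) : IsProbabilityMeasure (P.map (ε n)) :=
    Measure.isProbabilityMeasure_map (hεm n).aemeasurable
  have hlim := tendsto_integral_sq_relEffect_sub_conv (condDistrib Y X P)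
    ((P.map X).prod (P.map X)) fun c hc => tendsto_measureReal_abs_ge_of_tendsto_integral hεdist hc
  refine (hlim.const_mul (alphaCoeff (P.map X))⁻¹).congr fun n => ?_
  rw [sepCoeff]
  congr 1
  have hcond := condDistrib_add_ae_eq_conv hX hY (hεm n) (hεindep n)
  refine integral_congr_ae ?_
  filter_upwards [Measure.quasiMeasurePreserving_fst.ae hcond,
    Measure.quasiMeasurePreserving_snd.ae hcond] with z h1 h2
  rw [h1, h2]

/-- Robustness of `Λ` against small perturbations of the response: if `εₙ → 0` in
distribution, each `εₙ` is independent of `(X, Y)`, and the quantile transforms of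
`Y + εₙ` converge to that of `Y`, then `Λ(Y + εₙ | X) → Λ(Y|X)`. -/
theorem sepCoeff_robust_to_small_perturbations
    {p : ℕ} (hp : 1 ≤ p)
    {Ω : Type*} [MeasurableSpace Ω] (P : Measure Ω) [IsProbabilityMeasure P]
    (X : Ω → (Fin p → ℝ)) (Y : Ω → ℝ)
    (hX : Measurable X) (hY : Measurable Y)
    (hXnd : ∃ k, Nondegenerate P fun ω => X ω k)
    (hYnd : Nondegenerate P Y)
    (ε : ℕ → Ω → ℝ) (hεm : ∀ n, Measurable (ε n))
    (hεdist : ∀ f : BoundedContinuousFunction ℝ ℝ,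
      Tendsto (fun n => ∫ x, f x ∂(P.map (ε n))) atTop (𝓝 (f 0)))
    (hεindep : ∀ n, IndepFun (fun ω => (X ω, Y ω)) (ε n) P)
    (hquant : ∀ᵐ t ∂(volume.restrict (Set.Ioo (0 : ℝ) 1)),
      Tendsto (fun n => mcdf (P.map fun ω => Y ω + ε n ω)
          (mquantile (P.map fun ω => Y ω + ε n ω) t)) atTop
        (𝓝 (mcdf (P.map Y) (mquantile (P.map Y) t)))) :
    Tendsto (fun n => sepCoeff P (fun ω => Y ω + ε n ω) X) atTop
      (𝓝 (sepCoeff P Y X)) :=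
  sepCoeff_robust_to_small_perturbations_general P X Y hX hY ε hεm hεdist hεindep
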